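/- There exists a constant a₀ > 0 such that for all a ≥ a₀, all n ∈ ℕ, and all r > 0, θ ∈ ℝ, the quantity K_n = -(6a + (4/r⁶ - 2/r⁴) e^{-1/r²} cos(nθ)) / (1 + a r² + e^{-1/r²} cos(nθ)) is negative and uniformly bounded: there is Λ > 0 (independent of n) with -Λ ≤ K_n < 0. -/
import Mathlib

private lemma cube_mul_exp_neg_le {x : ℝ} (hx : 0 < x) : x ^ 3 * Real.exp (-x) ≤ 6 := by
  have h := Real.sum_le_exp_of_nonneg hx.le 4
  have hsum : x ^ 3 / 6 ≤ Real.exp x := by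
    have h0 : 0 ≤ x := hx.le
    calc x ^ 3 / 6 ≤ ∑ i ∈ Finset.range 4, x ^ i / (Nat.factorial i) := by
          simp [Finset.sum_range_succ, Nat.factorial]
          positivity
      _ ≤ Real.exp x := h
  have hp := Real.exp_pos x
  rw [Real.exp_neg]
  have := mul_inv_cancel₀ (ne_of_gt hp)
  nlinarith [mul_pos (mul_pos hx (mul_pos hx hx)) hp]

private lemma sq_mul_exp_neg_le {x : ℝ} (hx : 0 < x) : x ^ 2 * Real.exp (-x) ≤ 2 := by
  have hsum : x ^ 2 / 2 ≤ Real.exp x := by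
    nlinarith [Real.quadratic_le_exp_of_nonneg hx.le]
  have hp := Real.exp_pos x
  rw [Real.exp_neg]
  have := mul_inv_cancel₀ (ne_of_gt hp)
  nlinarith [mul_pos (mul_pos hx hx) hp]

private lemma exp_neg_le {x : ℝ} (hx : 0 < x) : Real.exp (-x) ≤ 1 / x := by
  have h := Real.add_one_le_exp x
  have hp := Real.exp_pos x
  rw [Real.exp_neg, one_div]
  exact inv_anti₀ hx (by linarith)

/-- There exists `a₀ > 0` such that for all `a ≥ a₀`, the Gaussian curvatures
`Kₙ = -(6a + (4/r⁶ - 2/r⁴)e^{-1/r²}cos(nθ)) / (1 + a r² + e^{-1/r²}cos(nθ))`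
are negative and uniformly bounded with respect to `n`: there is `Λ > 0`
(independent of `n`) with `-Λ ≤ Kₙ < 0` for all `n`, `r > 0`, `θ`. -/
theorem stmt2 : ∃ a₀ : ℝ, 0 < a₀ ∧ ∀ a : ℝ, a₀ ≤ a → ∃ Λ : ℝ, 0 < Λ ∧
    ∀ (n : ℕ) (r θ : ℝ), 0 < r →
      (-Λ ≤ -(6 * a + (4 / r ^ 6 - 2 / r ^ 4) * Real.exp (-1 / r ^ 2) * Real.cos (n * θ)) /
              (1 + a * r ^ 2 + Real.exp (-1 / r ^ 2) * Real.cos (n * θ)) ∧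
        -(6 * a + (4 / r ^ 6 - 2 / r ^ 4) * Real.exp (-1 / r ^ 2) * Real.cos (n * θ)) /
              (1 + a * r ^ 2 + Real.exp (-1 / r ^ 2) * Real.cos (n * θ)) < 0) := by
  refine ⟨5, by norm_num, fun a ha => ⟨6 * a + 28, by nlinarith, fun n r θ hr => ?_⟩⟩
  set c := Real.cos (n * θ) with hc
  have hc1 : |c| ≤ 1 := Real.abs_cos_le_one _
  have hr2 : (0:ℝ) < r ^ 2 := by positivity
  set x : ℝ := 1 / r ^ 2 with hx
  have hxpos : 0 < x := by positivity
  have hex : -1 / r ^ 2 = -x := by rw [hx]; ring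
  have hx3 : 4 / r ^ 6 = 4 * x ^ 3 := by rw [hx]; field_simp
  have hx2 : 2 / r ^ 4 = 2 * x ^ 2 := by rw [hx]; field_simp
  have h3 := cube_mul_exp_neg_le hxpos
  have h2 := sq_mul_exp_neg_le hxpos
  have hEpos : 0 < Real.exp (-x) := Real.exp_pos _
  have hE : Real.exp (-x) ≤ r ^ 2 := by
    have := exp_neg_le hxpos
    rw [hx] at this
    calc Real.exp (-x) ≤ 1 / (1 / r ^ 2) := this
      _ = r ^ 2 := by field_simp
  rw [hex, hx3, hx2]
  -- bound on |A| where A = (4x³ - 2x²) exp(-x)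
  have hA : |(4 * x ^ 3 - 2 * x ^ 2) * Real.exp (-x) * c| ≤ 28 := by
    rw [abs_mul]
    have h1 : |(4 * x ^ 3 - 2 * x ^ 2) * Real.exp (-x)| ≤ 28 := by
      rw [abs_mul, abs_of_pos hEpos]
      have : |4 * x ^ 3 - 2 * x ^ 2| ≤ 4 * x ^ 3 + 2 * x ^ 2 :=
        abs_le.mpr ⟨by nlinarith, by nlinarith⟩
      calc |4 * x ^ 3 - 2 * x ^ 2| * Real.exp (-x)
          ≤ (4 * x ^ 3 + 2 * x ^ 2) * Real.exp (-x) := by nlinarith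
        _ = 4 * (x ^ 3 * Real.exp (-x)) + 2 * (x ^ 2 * Real.exp (-x)) := by ring
        _ ≤ 28 := by nlinarith
    calc |(4 * x ^ 3 - 2 * x ^ 2) * Real.exp (-x)| * |c|
        ≤ 28 * 1 := by
          apply mul_le_mul h1 hc1 (abs_nonneg _) (by norm_num)
      _ = 28 := by norm_num
  have hAl := abs_le.mp hA
  -- denominator bound
  have hEc : Real.exp (-x) * c ≥ -(r ^ 2) := by
    nlinarith [abs_le.mp hc1, hE, hEpos]
  have hD : 1 ≤ 1 + a * r ^ 2 + Real.exp (-x) * c := by nlinarith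
  have hDpos : 0 < 1 + a * r ^ 2 + Real.exp (-x) * c := lt_of_lt_of_le one_pos hD
  -- numerator bounds
  have hNl : 2 ≤ 6 * a + (4 * x ^ 3 - 2 * x ^ 2) * Real.exp (-x) * c := by nlinarith
  have hNu : 6 * a + (4 * x ^ 3 - 2 * x ^ 2) * Real.exp (-x) * c ≤ 6 * a + 28 := by nlinarith
  constructor
  · rw [neg_div, neg_le_neg_iff, div_le_iff₀ hDpos]
    nlinarith
  · rw [neg_div]
    exact neg_lt_zero.mpr (div_pos (by linarith) hDpos)
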